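/- (Correctness of one iteration of van der Hoeven's exponential loop.) Let f ∈ ℂ⟦x⟧ have zero constant coefficient, let g = exp(f) and u = exp(−f), and let m ≥ 1 and k ≥ 1. Define ψ := the k-th block of (Σ_{i<k} g_[i] x^{im}) · (Σ_{i≤k} (δf)_[i] x^{im}), define φ := u · ψ, and let w ∈ ℂ⟦x⟧ be the series with coeff_j(w) = coeff_j(φ)/(km + j) for all j ≥ 0. Then g_[k] ≡ g_[0] · w (mod x^m). -/

import Mathlib

open PowerSeries

/-- `exp(f)`: substitution of `f` (with nilpotent, i.e. zero, constant coefficient)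
into the exponential series `Σ_{n≥0} xⁿ/n!`.  Since the constant coefficient of `f`
vanishes, the coefficient of degree `d` only receives contributions from `f^n` with
`n ≤ d`, so the following finite sum computes it. -/
noncomputable def expPS (f : PowerSeries ℂ) : PowerSeries ℂ :=
  PowerSeries.mk fun d => ∑ n ∈ Finset.range (d + 1),
    PowerSeries.coeff d (f ^ n) / (n.factorial : ℂ)

/-- The operator `δh = x · h′`, where `h′` is the formal derivative. -/
noncomputable def delta (h : PowerSeries ℂ) : PowerSeries ℂ :=
  PowerSeries.X * h.derivativeFun

/-- `a ≡ b (mod x^N)`: the coefficients of `a` and `b` agree in every degree `< N`. -/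
def modX (N : ℕ) (a b : PowerSeries ℂ) : Prop :=
  ∀ i < N, PowerSeries.coeff i a = PowerSeries.coeff i b

/-- The `k`-th block (of size `m`) of a power series: the polynomial (as a power
series) of degree `< m` whose coefficient of `x^j` is the coefficient of `x^{km+j}`. -/
noncomputable def blk (m k : ℕ) (h : PowerSeries ℂ) : PowerSeries ℂ :=
  PowerSeries.mk fun j => if j < m then PowerSeries.coeff (k * m + j) h else 0

/-!
Write `g = G + x^{km} R` with `G` the truncation of `g` below degree `km`. Since
`δg = g·δf` and `δ(x^{km} R) = x^{km} (δR + km·R)`, comparing the coefficients of degrees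
`km, …, km + m - 1` shows `ψ ≡ δR + km·R - R·δf (mod x^m)`: in those degrees `G·δf` only sees
the first `k + 1` blocks of `δf`. As `δu = -u·δf`, the operator `δ + km` sends `uR` to
`u·(δR + km·R - R·δf) ≡ φ`, and it multiplies `x^j` by `km + j`; hence `uR ≡ w`, and
`R = g·(uR) ≡ g_[0]·w (mod x^m)`.
-/

theorem delta_eq (h : ℂ⟦X⟧) : delta h = X * d⁄dX ℂ h := rfl

theorem coeff_delta (h : ℂ⟦X⟧) (n : ℕ) : coeff n (delta h) = n * coeff n h := by
  cases n with
  | zero => simp [delta_eq]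
  | succ n => rw [delta_eq, coeff_succ_X_mul, coeff_derivative]; push_cast; ring

theorem delta_add (a b : ℂ⟦X⟧) : delta (a + b) = delta a + delta b := by
  simp only [delta_eq, map_add, mul_add]

theorem delta_neg (a : ℂ⟦X⟧) : delta (-a) = -delta a := by
  simp only [delta_eq, map_neg, mul_neg]

theorem delta_mul (a b : ℂ⟦X⟧) : delta (a * b) = a * delta b + b * delta a := by
  simp only [delta_eq, Derivation.leibniz, smul_eq_mul]; ring

theorem delta_X_pow_mul (n : ℕ) (h : ℂ⟦X⟧) :
    delta (X ^ n * h) = X ^ n * (delta h + (n : ℂ⟦X⟧) * h) := by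
  ext i
  rw [coeff_delta, coeff_X_pow_mul', coeff_X_pow_mul']
  split_ifs with hi
  · rw [map_add, coeff_delta, ← map_natCast (C (R := ℂ)), coeff_C_mul]
    push_cast [hi]; ring
  · rw [mul_zero]

theorem PowerSeries.coeff_pow_eq_zero_of_lt {R : Type*} [CommSemiring R] {f : R⟦X⟧}
    (hf : constantCoeff f = 0) {d n : ℕ} (h : d < n) : coeff d (f ^ n) = 0 :=
  X_pow_dvd_iff.mp (pow_dvd_pow_of_dvd (X_dvd_iff.mpr hf) n) d h

theorem expPS_eq_subst_exp {f : ℂ⟦X⟧} (hf : constantCoeff f = 0) :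
    expPS f = (exp ℂ).subst f := by
  ext d
  rw [expPS, coeff_mk, coeff_subst' (HasSubst.of_constantCoeff_zero' hf),
    finsum_eq_sum_of_support_subset (s := Finset.range (d + 1))]
  · refine Finset.sum_congr rfl fun n _ => ?_
    simp [div_eq_inv_mul]
  · intro n hn
    by_contra h
    simp only [Finset.coe_range, Set.mem_Iio, not_lt] at h
    exact hn (by simp only [coeff_pow_eq_zero_of_lt hf (show d < n by omega), smul_zero])

theorem derivative_expPS {f : ℂ⟦X⟧} (hf : constantCoeff f = 0) :
    d⁄dX ℂ (expPS f) = expPS f * d⁄dX ℂ f := by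
  rw [expPS_eq_subst_exp hf, derivative_subst (HasSubst.of_constantCoeff_zero' hf),
    derivative_exp]

theorem delta_expPS {f : ℂ⟦X⟧} (hf : constantCoeff f = 0) :
    delta (expPS f) = expPS f * delta f := by
  rw [delta_eq, delta_eq, derivative_expPS hf]; ring

theorem constantCoeff_expPS (f : ℂ⟦X⟧) : constantCoeff (expPS f) = 1 := by
  rw [← coeff_zero_eq_constantCoeff_apply, expPS, coeff_mk]
  simp

theorem expPS_mul_expPS_neg {f : ℂ⟦X⟧} (hf : constantCoeff f = 0) :
    expPS f * expPS (-f) = 1 := by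
  have hf' : constantCoeff (-f) = 0 := by rw [map_neg, hf, neg_zero]
  refine derivative.ext ?_ (by simp [constantCoeff_expPS])
  rw [Derivation.leibniz, derivative_expPS hf, derivative_expPS hf', map_neg,
    Derivation.map_one_eq_zero, smul_eq_mul, smul_eq_mul]
  ring

namespace modX

variable {N : ℕ} {a b c : ℂ⟦X⟧}

theorem iff_X_pow_dvd_sub : modX N a b ↔ X ^ N ∣ a - b := by
  simp only [modX, X_pow_dvd_iff, map_sub, sub_eq_zero]

theorem trans (hab : modX N a b) (hbc : modX N b c) : modX N a c :=
  fun i hi => (hab i hi).trans (hbc i hi)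

instance : Trans (modX N) (modX N) (modX N) := ⟨trans⟩

theorem symm (h : modX N a b) : modX N b a := fun i hi => (h i hi).symm

theorem mul_left (p : ℂ⟦X⟧) (h : modX N a b) : modX N (p * a) (p * b) :=
  iff_X_pow_dvd_sub.mpr (by rw [← mul_sub]; exact (iff_X_pow_dvd_sub.mp h).mul_left p)

theorem mul_right (p : ℂ⟦X⟧) (h : modX N a b) : modX N (a * p) (b * p) := by
  simpa only [mul_comm _ p] using h.mul_left p

end modX

theorem modX_coe_trunc (N : ℕ) (h : ℂ⟦X⟧) : modX N (trunc N h : ℂ⟦X⟧) h :=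
  fun _ hi => coeff_coe_trunc_of_lt hi

noncomputable def tail {R : Type*} [Semiring R] (n : ℕ) (h : R⟦X⟧) : R⟦X⟧ :=
  mk fun i => coeff (i + n) h

theorem coeff_tail {R : Type*} [Semiring R] (n i : ℕ) (h : R⟦X⟧) :
    coeff i (tail n h) = coeff (i + n) h :=
  coeff_mk _ _

@[simp]
theorem tail_zero {R : Type*} [Semiring R] (h : R⟦X⟧) : tail 0 h = h := by
  ext i
  rw [coeff_tail, add_zero]

theorem modX_blk_tail (m k : ℕ) (h : ℂ⟦X⟧) : modX m (blk m k h) (tail (k * m) h) := by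
  intro j hj
  rw [blk, coeff_mk, if_pos hj, coeff_tail, add_comm]

theorem coeff_blk_mul_X_pow (m i n : ℕ) (h : ℂ⟦X⟧) :
    coeff n (blk m i h * X ^ (i * m)) =
      if i * m ≤ n ∧ n < i * m + m then coeff n h else 0 := by
  rw [coeff_mul_X_pow', blk, coeff_mk]
  by_cases hn : i * m ≤ n
  · simp only [hn, true_and, if_true, Nat.add_sub_cancel' hn, Nat.sub_lt_iff_lt_add' hn]
  · simp only [hn, false_and, if_false]

theorem sum_blk_mul_X_pow_eq_trunc (m K : ℕ) (h : ℂ⟦X⟧) :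
    ∑ i ∈ Finset.range K, blk m i h * X ^ (i * m) = (trunc (K * m) h : ℂ⟦X⟧) := by
  induction K with
  | zero => simp
  | succ K ih =>
    ext n
    rw [Finset.sum_range_succ, map_add, ih, coeff_blk_mul_X_pow, Polynomial.coeff_coe,
      Polynomial.coeff_coe, coeff_trunc, coeff_trunc, add_one_mul]
    split_ifs <;> first | omega | simp

theorem modX_tail_trunc_mul_trunc_delta {f g : ℂ⟦X⟧} (hg : delta g = g * delta f) (N m : ℕ) :
    modX m (tail N ((trunc N g : ℂ⟦X⟧) * trunc (N + m) (delta f)))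
      (delta (tail N g) + N * tail N g - tail N g * delta f) := by
  intro j hj
  have hsplit : g = X ^ N * tail N g + (trunc N g : ℂ⟦X⟧) := eq_X_pow_mul_shift_add_trunc N g
  set R := tail N g
  set G : ℂ⟦X⟧ := (trunc N g : ℂ⟦X⟧)
  have hG : coeff (j + N) G = 0 := by simp [G, coeff_trunc]
  have hGD :
      coeff (j + N) (G * (trunc (N + m) (delta f) : ℂ⟦X⟧)) = coeff (j + N) (G * delta f) :=
    (modX_coe_trunc (N + m) (delta f)).mul_left G (j + N) (by omega)
  rw [hsplit, delta_add, delta_X_pow_mul, add_mul, mul_assoc] at hg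
  have hode := congrArg (coeff (j + N)) hg
  simp only [map_add, coeff_X_pow_mul, coeff_delta, hG, mul_zero, add_zero] at hode
  rw [coeff_tail, hGD, map_sub, map_add, coeff_delta]
  linear_combination -hode

theorem modX_of_delta_add_natCast_mul {N m : ℕ} (hN : 0 < N) {v φ : ℂ⟦X⟧}
    (h : modX m (delta v + N * v) φ) :
    modX m v (mk fun j => coeff j φ / ((N + j : ℕ) : ℂ)) := by
  intro j hj
  rw [coeff_mk, eq_div_iff (Nat.cast_ne_zero.mpr (by omega)), ← h j hj, map_add, coeff_delta,
    ← map_natCast (C (R := ℂ)), coeff_C_mul]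
  push_cast
  ring

/-- Correctness of one iteration of van der Hoeven's exponential loop. -/
theorem vdh_loop_correct (f : PowerSeries ℂ)
    (hf : PowerSeries.constantCoeff f = 0)
    (g u : PowerSeries ℂ) (hg : g = expPS f) (hu : u = expPS (-f))
    (m k : ℕ) (hm : 1 ≤ m) (hk : 1 ≤ k)
    (ψ φ w : PowerSeries ℂ)
    (hψ : ψ = blk m k ((∑ i ∈ Finset.range k, blk m i g * PowerSeries.X ^ (i * m)) *
      (∑ i ∈ Finset.range (k + 1), blk m i (delta f) * PowerSeries.X ^ (i * m))))
    (hφ : φ = u * ψ)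
    (hw : w = PowerSeries.mk fun j =>
      PowerSeries.coeff j φ / ((k * m + j : ℕ) : ℂ)) :
    modX m (blk m k g) (blk m 0 g * w) := by
  set R := tail (k * m) g
  have hδg : delta g = g * delta f := hg ▸ delta_expPS hf
  have hδu : delta u = -(u * delta f) := by
    rw [hu, delta_expPS (by rw [map_neg, hf, neg_zero]), delta_neg, mul_neg]
  have hgu : g * u = 1 := hg ▸ hu ▸ expPS_mul_expPS_neg hf
  have hψR : modX m ψ (delta R + (k * m : ℕ) * R - R * delta f) := by
    rw [hψ, sum_blk_mul_X_pow_eq_trunc, sum_blk_mul_X_pow_eq_trunc, add_one_mul]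
    exact (modX_blk_tail m k _).trans (modX_tail_trunc_mul_trunc_delta hδg (k * m) m)
  have huR : modX m (u * R) w := by
    rw [hw]
    refine modX_of_delta_add_natCast_mul (Nat.mul_pos hk hm) ?_
    rw [hφ]
    convert (hψR.mul_left u).symm using 1
    rw [delta_mul, hδu]
    ring
  calc modX m (blk m k g) R := modX_blk_tail m k g
    _ = g * (u * R) := by rw [← mul_assoc, hgu, one_mul]
    modX m _ (g * w) := huR.mul_left g
    modX m _ (blk m 0 g * w) := by
      simpa only [zero_mul, tail_zero] using (modX_blk_tail m 0 g).symm.mul_right w
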